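/- The operator norm of the differentiation operator D restricted to the range of the Kantorovič operator K_n satisfies ‖D|_{im(K_n)} ∘ K_n‖ ≤ 4(n² + n), i.e., ‖D K_n f‖_p ≤ 4(n²+n)‖f‖_1 for suitable f. -/

import Mathlib

/-!
Write `K_n f = (n + 1) ∑ₖ bₙₖ aₖ`, where `bₙₖ` are the Bernstein polynomials and `aₖ` is the
integral of `f` over `[k/(n+1), (k+1)/(n+1)]`. Since `b'ₙₖ = n (bₙ₋₁,ₖ₋₁ - bₙ₋₁,ₖ)` and Bernstein
polynomials take values in `[0, 1]` on `[0, 1]`, there `|b'ₙₖ| ≤ n`; as `∑ₖ |aₖ| ≤ ‖f‖₁`, this gives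
`|D K_n f| ≤ n (n + 1) ‖f‖₁`.
-/

noncomputable section

/-- The Kantorovič operator of order `n`. -/
def kantorovichOp (n : ℕ) (f : ℝ → ℝ) (x : ℝ) : ℝ :=
  (n + 1 : ℝ) * ∑ k ∈ Finset.range (n + 1), (n.choose k : ℝ) * x ^ k * (1 - x) ^ (n - k) *
    ∫ u in ((k : ℝ) / (n + 1))..((k + 1 : ℝ) / (n + 1)), f u

open Finset Polynomial MeasureTheory

namespace bernsteinPolynomial

variable {x : ℝ}

lemma eval_nonneg (n ν : ℕ) (hx : x ∈ Set.Icc (0 : ℝ) 1) :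
    0 ≤ (bernsteinPolynomial ℝ n ν).eval x := by
  have := hx.1
  have := sub_nonneg.2 hx.2
  simp only [bernsteinPolynomial, eval_mul, eval_pow, eval_sub, eval_one, eval_X, eval_natCast]
  positivity

lemma eval_le_one (n ν : ℕ) (hx : x ∈ Set.Icc (0 : ℝ) 1) :
    (bernsteinPolynomial ℝ n ν).eval x ≤ 1 := by
  rcases le_or_gt ν n with hν | hν
  · calc (bernsteinPolynomial ℝ n ν).eval x
        ≤ ∑ μ ∈ range (n + 1), (bernsteinPolynomial ℝ n μ).eval x :=
          single_le_sum (fun μ _ => eval_nonneg n μ hx) (mem_range.2 (Nat.lt_succ_of_le hν))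
      _ = 1 := by rw [← eval_finsetSum, bernsteinPolynomial.sum, eval_one]
  · simp [eq_zero_of_lt ℝ hν]

lemma abs_eval_derivative_le (n ν : ℕ) (hx : x ∈ Set.Icc (0 : ℝ) 1) :
    |(derivative (bernsteinPolynomial ℝ n ν)).eval x| ≤ n := by
  cases ν with
  | zero =>
    rw [derivative_zero, eval_mul, eval_neg, eval_natCast, neg_mul, abs_neg, abs_mul,
      Nat.abs_cast, abs_of_nonneg (eval_nonneg _ _ hx)]
    exact mul_le_of_le_one_right n.cast_nonneg (eval_le_one _ _ hx)
  | succ ν =>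
    rw [derivative_succ, eval_mul, eval_sub, eval_natCast, abs_mul, Nat.abs_cast]
    refine mul_le_of_le_one_right n.cast_nonneg (abs_sub_le_of_nonneg_of_le ?_ ?_ ?_ ?_) <;>
      first | exact eval_nonneg _ _ hx | exact eval_le_one _ _ hx

end bernsteinPolynomial

lemma sum_integral_uniform_partition {g : ℝ → ℝ} (hg : IntervalIntegrable g volume 0 1)
    (n : ℕ) :
    ∑ k ∈ range (n + 1), ∫ u in ((k : ℝ) / (n + 1))..((k + 1 : ℝ) / (n + 1)), g u =
      ∫ u in (0 : ℝ)..1, g u := by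
  have hn : (0 : ℝ) < n + 1 := n.cast_add_one_pos
  have hint : ∀ k < n + 1,
      IntervalIntegrable g volume ((k : ℝ) / (n + 1)) (((k + 1 : ℕ) : ℝ) / (n + 1)) := by
    intro k hk
    refine hg.mono_set (Set.uIcc_subset_uIcc ?_ ?_) <;>
      rw [Set.uIcc_of_le zero_le_one] <;> refine ⟨by positivity, (div_le_one hn).2 ?_⟩ <;>
      exact_mod_cast (by omega)
  have := intervalIntegral.sum_integral_adjacent_intervals hint
  push_cast at this
  rwa [zero_div, div_self hn.ne'] at this

lemma kantorovichOp_eq_sum_bernstein (n : ℕ) (f : ℝ → ℝ) :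
    kantorovichOp n f = fun x => (n + 1 : ℝ) * ∑ k ∈ range (n + 1),
      (bernsteinPolynomial ℝ n k).eval x * ∫ u in ((k : ℝ) / (n + 1))..((k + 1 : ℝ) / (n + 1)), f u := by
  ext x
  simp [kantorovichOp, bernsteinPolynomial]

lemma hasDerivAt_kantorovichOp (n : ℕ) (f : ℝ → ℝ) (x : ℝ) :
    HasDerivAt (kantorovichOp n f) ((n + 1 : ℝ) * ∑ k ∈ range (n + 1),
      (derivative (bernsteinPolynomial ℝ n k)).eval x *
        ∫ u in ((k : ℝ) / (n + 1))..((k + 1 : ℝ) / (n + 1)), f u) x := by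
  rw [kantorovichOp_eq_sum_bernstein]
  exact .const_mul _ (.fun_sum fun k _ => (Polynomial.hasDerivAt _ x).mul_const _)

theorem kantorovich_deriv_bound_general (n : ℕ) (f : ℝ → ℝ)
    (hf : IntervalIntegrable f MeasureTheory.volume 0 1)
    (x : ℝ) (hx : x ∈ Set.Icc (0 : ℝ) 1) :
    |deriv (kantorovichOp n f) x| ≤
      4 * ((n : ℝ) ^ 2 + n) * ∫ u in (0 : ℝ)..1, |f u| := by
  have hn : (0 : ℝ) < n + 1 := n.cast_add_one_pos
  have hcell : ∀ k : ℕ, |∫ u in ((k : ℝ) / (n + 1))..((k + 1 : ℝ) / (n + 1)), f u| ≤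
      ∫ u in ((k : ℝ) / (n + 1))..((k + 1 : ℝ) / (n + 1)), |f u| := fun k =>
    intervalIntegral.abs_integral_le_integral_abs (by gcongr; linarith)
  rw [(hasDerivAt_kantorovichOp n f x).deriv, abs_mul, abs_of_pos hn]
  calc (n + 1 : ℝ) * |∑ k ∈ range (n + 1), (derivative (bernsteinPolynomial ℝ n k)).eval x *
        ∫ u in ((k : ℝ) / (n + 1))..((k + 1 : ℝ) / (n + 1)), f u|
      ≤ (n + 1) * ∑ k ∈ range (n + 1),
          n * ∫ u in ((k : ℝ) / (n + 1))..((k + 1 : ℝ) / (n + 1)), |f u| := by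
        gcongr
        refine (abs_sum_le_sum_abs _ _).trans (sum_le_sum fun k _ => ?_)
        rw [abs_mul]
        exact mul_le_mul (bernsteinPolynomial.abs_eval_derivative_le n k hx) (hcell k)
          (abs_nonneg _) n.cast_nonneg
    _ = (n + 1) * n * ∫ u in (0 : ℝ)..1, |f u| := by
        rw [← mul_sum, sum_integral_uniform_partition hf.abs, mul_assoc]
    _ ≤ 4 * ((n : ℝ) ^ 2 + n) * ∫ u in (0 : ℝ)..1, |f u| := by
        have : 0 ≤ ∫ u in (0 : ℝ)..1, |f u| :=
          intervalIntegral.integral_nonneg zero_le_one fun u _ => abs_nonneg _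
        exact mul_le_mul_of_nonneg_right (by nlinarith [n.cast_nonneg (α := ℝ)]) this

/-- **Bound for the derivative of the Kantorovič operator:**
`‖D K_n f‖_∞ ≤ 4 (n² + n) ‖f‖_1`, i.e. the operator norm of `D ∘ K_n` from
`L¹([0,1])` to `C([0,1])` is at most `4(n² + n)`. -/
theorem kantorovich_deriv_bound (n : ℕ) (hn : 2 ≤ n) (f : ℝ → ℝ)
    (hf : IntervalIntegrable f MeasureTheory.volume 0 1)
    (x : ℝ) (hx : x ∈ Set.Icc (0 : ℝ) 1) :
    |deriv (kantorovichOp n f) x| ≤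
      4 * ((n : ℝ) ^ 2 + n) * ∫ u in (0 : ℝ)..1, |f u| :=
  kantorovich_deriv_bound_general n f hf x hx

end
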